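/- (Optimization-level correctness of the Theorem 1 reduction.) In the SpecialRM instance constructed from a finite simple graph G' = (V', E') with minimum degree at least 1 and price p > 0, the maximum over all seed sets S ⊆ V' of the number of non-seed adopters equals |V'| minus the minimum vertex cover number: max_{S ⊆ V'} |σ_p(S) \ S| = |V'| − τ(G'), where τ(G') is the minimum cardinality of a vertex cover of G'. -/

import Mathlib

open Finset
open scoped Classical

/-- A set `S` is adoption-closed for seed set `A` at price `p`. The adoption set `σ_p(A)`
is the least such set. -/
def AdoptClosed {V : Type*} [DecidableEq V]
    (χ : V → ℝ) (w : V → V → ℝ) (F : ℝ → ℝ) (p : ℝ) (A S : Finset V) : Prop :=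
  A ⊆ S ∧ ∀ v, p ≤ χ v + F (∑ u ∈ S.erase v, w u v) → v ∈ S

/-- The weights of the SpecialRM instance constructed from a simple graph `G` at price `p`:
`w u v = p / deg v` if `{u,v}` is an edge, and `0` otherwise. -/
noncomputable def srmW {V : Type*} [Fintype V] (G : SimpleGraph V) [DecidableRel G.Adj]
    (p : ℝ) (u v : V) : ℝ :=
  if G.Adj u v then p / G.degree v else 0

/-! With `p > 0` and no isolated vertices, a vertex `v` receives influence
`p · |N(v) ∩ S| / deg v` from a set `S`, which reaches the price exactly when `N(v) ⊆ S`.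
So `σ_p(A)` is the least superset of `A` containing every vertex whose whole neighbourhood it
contains. Seeding a vertex cover therefore makes everyone adopt, which gives `|V| − τ` non-seed
adopters. Conversely, the non-seed adopters form an independent set: removing two adjacent ones
from `σ_p(A)` leaves a closed set, against minimality. Their complement is a vertex cover, so
there are at most `|V| − τ` of them. -/

namespace SimpleGraph

variable {V : Type*} [Fintype V] (G : SimpleGraph V) [DecidableRel G.Adj]

def IsNeighborClosed (A S : Finset V) : Prop :=
  A ⊆ S ∧ ∀ v, G.neighborFinset v ⊆ S → v ∈ S

variable {G}

theorem IsNeighborClosed.eq_univ {A S : Finset V} (hS : G.IsNeighborClosed A S)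
    (hA : G.IsVertexCover A) : S = univ :=
  eq_univ_of_forall fun v => by
    by_cases hv : v ∈ A
    · exact hS.1 hv
    · refine hS.2 v fun u hu => hS.1 ?_
      exact (hA ((G.mem_neighborFinset v u).1 hu)).resolve_left hv

theorem IsNeighborClosed.sdiff_pair [DecidableEq V] {A S : Finset V} {a b : V}
    (hS : G.IsNeighborClosed A S) (hab : G.Adj a b) (ha : a ∉ A) (hb : b ∉ A) :
    G.IsNeighborClosed A (S \ {a, b}) := by
  refine ⟨fun v hv => mem_sdiff.2 ⟨hS.1 hv, ?_⟩, fun v hv => mem_sdiff.2 ⟨?_, ?_⟩⟩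
  · rw [mem_insert, mem_singleton]
    rintro (rfl | rfl) <;> contradiction
  · exact hS.2 v (hv.trans sdiff_subset)
  · rw [mem_insert, mem_singleton]
    rintro (rfl | rfl)
    · simpa using hv ((G.mem_neighborFinset _ _).2 hab)
    · simpa using hv ((G.mem_neighborFinset _ _).2 hab.symm)

theorem isIndepSet_sdiff_of_isLeast [DecidableEq V] {A T : Finset V}
    (hT : IsLeast {S | G.IsNeighborClosed A S} T) : G.IsIndepSet ↑(T \ A) := by
  intro a ha b hb _ hab
  rw [coe_sdiff, Set.mem_sdiff, mem_coe, mem_coe] at ha hb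
  simpa using hT.2 (hT.1.sdiff_pair hab ha.2 hb.2) ha.1

theorem sum_srmW (p : ℝ) (A : Finset V) (v : V) :
    ∑ u ∈ A, srmW G p u v = #(G.neighborFinset v ∩ A) * (p / G.degree v) := by
  simp only [srmW, ← sum_filter, sum_const, nsmul_eq_mul, inter_comm (G.neighborFinset v)]
  congr 3
  ext u
  simp [G.adj_comm]

theorem le_sum_srmW_iff {p : ℝ} (hp : 0 < p) {v : V} (hv : 0 < G.degree v) (A : Finset V) :
    p ≤ ∑ u ∈ A, srmW G p u v ↔ G.neighborFinset v ⊆ A := by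
  have hd : (0 : ℝ) < G.degree v := by exact_mod_cast hv
  rw [sum_srmW, mul_div_assoc', le_div_iff₀ hd, mul_comm, mul_le_mul_iff_left₀ hp, Nat.cast_le,
    ← card_neighborFinset_eq_degree, ← inter_eq_left]
  exact ⟨fun h => eq_of_subset_of_card_le inter_subset_left h, fun h => by rw [h]⟩

theorem adoptClosed_srmW_iff [DecidableEq V] {p : ℝ} (hp : 0 < p) (hdeg : ∀ v, 0 < G.degree v)
    (A S : Finset V) :
    AdoptClosed (fun _ => 0) (srmW G p) id p A S ↔ G.IsNeighborClosed A S := by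
  simp only [AdoptClosed, IsNeighborClosed, zero_add, id, le_sum_srmW_iff hp (hdeg _),
    subset_erase, G.notMem_neighborFinset_self, not_false_eq_true, and_true]

end SimpleGraph

/-- Optimization-level correctness of the Theorem 1 reduction: the
maximum over all seed sets S of the number of non-seed adopters |σ_p(S) \ S| equals
|V| − τ(G), where τ(G) is the minimum vertex cover number. -/
theorem specialRM_max_nonseed_adopters_eq_card_sub_tau
    {V : Type*} [Fintype V] [DecidableEq V]
    (G : SimpleGraph V) [DecidableRel G.Adj]
    (hdeg : ∀ v, 1 ≤ G.degree v) (p : ℝ) (hp : 0 < p)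
    (sigma : Finset V → Finset V)
    (hsigma : ∀ S : Finset V,
      IsLeast {T : Finset V | AdoptClosed (fun _ => (0 : ℝ)) (srmW G p) id p S T}
        (sigma S))
    (τ : ℕ)
    (hτ : IsLeast {k : ℕ | ∃ C : Finset V,
      (∀ a b, G.Adj a b → a ∈ C ∨ b ∈ C) ∧ C.card = k} τ) :
    IsGreatest {k : ℕ | ∃ S : Finset V, (sigma S \ S).card = k}
      (Fintype.card V - τ) := by
  have hclosed (S : Finset V) : IsLeast {T | G.IsNeighborClosed S T} (sigma S) := by
    simpa only [SimpleGraph.adoptClosed_srmW_iff hp hdeg] using hsigma S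
  obtain ⟨⟨C, hC, rfl⟩, hτ_le⟩ := hτ
  refine ⟨⟨C, ?_⟩, ?_⟩
  · rw [(hclosed C).1.eq_univ fun a b hab => hC a b hab, ← compl_eq_univ_sdiff, card_compl]
  · rintro _ ⟨S, rfl⟩
    have hcover : G.IsVertexCover ↑(sigma S \ S)ᶜ := by
      rw [coe_compl, SimpleGraph.isVertexCover_compl]
      exact SimpleGraph.isIndepSet_sdiff_of_isLeast (hclosed S)
    have hτ_le_compl := hτ_le ⟨_, fun a b hab => hcover hab, rfl⟩
    rw [card_compl] at hτ_le_compl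
    have hcard_le := card_le_univ (sigma S \ S)
    omega
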